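/- Consider an instance of the strongly stable matching problem with closures containing doctors p₁, p₂, p₃, p₄, p₅ ∈ D and hospitals q₁, q₂, q₃ ∈ H with q₁, q₂, q₃ ∉ S, such that E(p₄) = {(p₄,q₁), (p₄,q₂)}, E(p₅) = {(p₅,q₁), (p₅,q₃)}, E(q₁) = {(p₁,q₁), (p₄,q₁), (p₅,q₁)}, E(q₂) = {(p₂,q₂), (p₃,q₂), (p₄,q₂)}, E(q₃) = {(p₅,q₃)}, and the preferences satisfy (p₁,q₁) ∼_{q₁} (p₄,q₁) ∼_{q₁} (p₅,q₁), (p₂,q₂) ∼_{q₂} (p₃,q₂) ∼_{q₂} (p₄,q₂), (p₄,q₁) ∼_{p₄} (p₄,q₂), and (p₅,q₁) ∼_{p₅} (p₅,q₃). Then every stable matching μ in G contains exactly one of the edges (p₁,q₁), (p₂,q₂), (p₃,q₂). -/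

import Mathlib

open Classical

variable {D H : Type}

def edgesD (E : Set (D × H)) (d : D) : Set (D × H) := {e ∈ E | e.1 = d}

def edgesH (E : Set (D × H)) (h : H) : Set (D × H) := {e ∈ E | e.2 = h}

def optD (E : Set (D × H)) (d : D) : Set (Option (D × H)) :=
  insert none (some '' edgesD E d)

def optH (E : Set (D × H)) (h : H) : Set (Option (D × H)) :=
  insert none (some '' edgesH E h)

/-- An instance of the strongly stable matching problem with closures:
a bipartite graph between doctors `D` and hospitals `H` with edge set `E`,
a set `S` of closable hospitals, and for each vertex a transitive, total
preference relation on its incident edges together with `∅` (modelled by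
`Option`, where `none` plays the role of `∅`), such that every incident
edge is strictly preferred to `∅`. -/
structure SSMC (D H : Type) where
  E : Set (D × H)
  S : Set H
  prefD : D → Option (D × H) → Option (D × H) → Prop
  prefH : H → Option (D × H) → Option (D × H) → Prop
  prefD_trans : ∀ d, ∀ e ∈ optD E d, ∀ f ∈ optD E d, ∀ g ∈ optD E d,
    prefD d e f → prefD d f g → prefD d e g
  prefD_total : ∀ d, ∀ e ∈ optD E d, ∀ f ∈ optD E d, prefD d e f ∨ prefD d f e
  prefD_none : ∀ d, ∀ e ∈ edgesD E d, prefD d (some e) none ∧ ¬ prefD d none (some e)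
  prefH_trans : ∀ h, ∀ e ∈ optH E h, ∀ f ∈ optH E h, ∀ g ∈ optH E h,
    prefH h e f → prefH h f g → prefH h e g
  prefH_total : ∀ h, ∀ e ∈ optH E h, ∀ f ∈ optH E h, prefH h e f ∨ prefH h f e
  prefH_none : ∀ h, ∀ e ∈ edgesH E h, prefH h (some e) none ∧ ¬ prefH h none (some e)

namespace SSMC

variable (I : SSMC D H)

/-- `e ≻_d f` -/
def strictD (d : D) (e f : Option (D × H)) : Prop := I.prefD d e f ∧ ¬ I.prefD d f e

/-- `e ∼_d f` -/
def simD (d : D) (e f : Option (D × H)) : Prop := I.prefD d e f ∧ I.prefD d f e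

/-- `e ≻_h f` -/
def strictH (h : H) (e f : Option (D × H)) : Prop := I.prefH h e f ∧ ¬ I.prefH h f e

/-- `e ∼_h f` -/
def simH (h : H) (e f : Option (D × H)) : Prop := I.prefH h e f ∧ I.prefH h f e

/-- A matching: a subset of `E` with at most one edge at each vertex. -/
def isMatching (μ : Set (D × H)) : Prop :=
  μ ⊆ I.E ∧ (∀ e ∈ μ, ∀ f ∈ μ, e.1 = f.1 → e = f) ∧
    (∀ e ∈ μ, ∀ f ∈ μ, e.2 = f.2 → e = f)

end SSMC

/-- `μ(d)`: the edge of `μ` at doctor `d` (or `none`). -/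
noncomputable def muD (μ : Set (D × H)) (d : D) : Option (D × H) :=
  if h : ∃ e, e ∈ μ ∧ e.1 = d then some h.choose else none

/-- `μ(h)`: the edge of `μ` at hospital `h` (or `none`). -/
noncomputable def muH (μ : Set (D × H)) (h : H) : Option (D × H) :=
  if hh : ∃ e, e ∈ μ ∧ e.2 = h then some hh.choose else none

namespace SSMC

variable (I : SSMC D H)

/-- `e` blocks the matching `μ`: `e ∈ E \ μ`, `e` weakly blocks `μ` on both of its
endpoints and strongly blocks `μ` on at least one of them (where blocking on a
hospital `h ∈ S` additionally requires `μ(h) ≠ ∅`). -/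
def blocks (μ : Set (D × H)) (e : D × H) : Prop :=
  e ∈ I.E ∧ e ∉ μ ∧
  I.prefD e.1 (some e) (muD μ e.1) ∧
  (I.prefH e.2 (some e) (muH μ e.2) ∧ (e.2 ∈ I.S → muH μ e.2 ≠ none)) ∧
  (I.strictD e.1 (some e) (muD μ e.1) ∨
    (I.strictH e.2 (some e) (muH μ e.2) ∧ (e.2 ∈ I.S → muH μ e.2 ≠ none)))

/-- A stable matching: no edge blocks it. -/
def stable (μ : Set (D × H)) : Prop :=
  I.isMatching μ ∧ ∀ e, ¬ I.blocks μ e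

/-- `Ch_D(F)`: union over doctors `d` of the most preferred edges of `F(d)`. -/
def ChD (F : Set (D × H)) : Set (D × H) :=
  {e ∈ F | ∀ f ∈ F, f.1 = e.1 → I.prefD e.1 (some e) (some f)}

/-- `Ch_H(F)`: union over hospitals `h` of the most preferred edges of `F(h)`. -/
def ChH (F : Set (D × H)) : Set (D × H) :=
  {e ∈ F | ∀ f ∈ F, f.2 = e.2 → I.prefH e.2 (some e) (some f)}

/-- `Ch(F) = Ch_H(Ch_D(F))`. -/
def Ch (F : Set (D × H)) : Set (D × H) := I.ChH (I.ChD F)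

/-- `e ≻_d F` for a flat set `F`. -/
def dSucc (F : Set (D × H)) (e : D × H) : Prop :=
  (∀ f ∈ F, f.1 ≠ e.1) ∨ ∃ f ∈ F, f.1 = e.1 ∧ I.strictD e.1 (some e) (some f)

/-- `e ∼_d F` for a flat set `F`. -/
def dSim (F : Set (D × H)) (e : D × H) : Prop :=
  ∃ f ∈ F, f.1 = e.1 ∧ I.simD e.1 (some e) (some f)

/-- `block(F)` for a flat set `F ⊆ E`. -/
def setBlock (F : Set (D × H)) : Set (D × H) :=
  {e | e ∈ I.E ∧ e ∉ F ∧ (∃ f ∈ F, f.2 = e.2) ∧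
    (I.dSucc F e ∨ I.dSim F e) ∧
    (I.dSucc F e → ∃ f ∈ F, f.2 = e.2 ∧ I.prefH e.2 (some e) (some f)) ∧
    (I.dSim F e → ∃ f ∈ F, f.2 = e.2 ∧ I.strictH e.2 (some e) (some f))}

/-- `L = Ch(E \ R)`. -/
def Lset (R : Set (D × H)) : Set (D × H) := I.Ch (I.E \ R)

/-- The pre-processing conditions (R1)–(R5) on a pair `(R, μ)`. -/
def preproc (R μ : Set (D × H)) : Prop :=
  R ⊆ I.E ∧ I.isMatching μ ∧
  -- (R1)
  (∀ σ, I.stable σ → ∀ e ∈ R, e ∉ σ) ∧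
  -- (R2)
  μ ⊆ I.Ch (I.E \ R) ∧
  -- (R3)
  (∀ d : D, (∃ e ∈ I.E \ R, e.1 = d) → ∃ e ∈ μ, e.1 = d) ∧
  -- (R4)
  R ∩ I.setBlock (I.Ch (I.E \ R)) = ∅ ∧
  -- (R5)
  (∀ d : D, ∀ e ∈ R, e.1 = d → ∀ f ∈ I.E \ R, f.1 = d → I.prefD d (some e) (some f))

/-- `h` is a critical hospital with respect to `(R, μ)`. -/
def critical (R μ : Set (D × H)) (h : H) : Prop :=
  h ∉ I.S ∧ (∀ e ∈ μ, e.2 ≠ h) ∧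
  ((∃ e ∈ I.Ch (I.E \ R), e.2 = h) ∨ (∃ e ∈ R, e.2 = h))

/-- Assumption (★): every doctor strictly prefers any acceptable hospital
outside `S` to any acceptable hospital in `S`. -/
def starAssumption : Prop :=
  ∀ (d : D) (h h' : H), (d, h) ∈ I.E → (d, h') ∈ I.E → h ∈ I.S → h' ∉ I.S →
    I.strictD d (some (d, h')) (some (d, h))

end SSMC

/-! An edge `(d, h)` with `h ∉ S` blocks `μ` as soon as one endpoint is unmatched and the other
weakly prefers the edge to its partner in `μ`; the indifferences of the gadget supply these weak
preferences. If `(p₁,q₁)` and an edge `(p, q₂)` with `p ≠ p₄` were both in `μ`, `p₄` would be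
unmatched and `(p₄,q₁)` would block. If none of the three edges were in `μ`, then `q₂` and `p₄`
force `(p₄,q₂) ∈ μ`, `q₃` forces `p₅` to be matched, and whichever of `q₁`, `q₃` is left
unmatched is blocked by its edge to `p₄` or `p₅`. -/

theorem muD_eq_none {μ : Set (D × H)} {d : D} (h : ∀ e ∈ μ, e.1 ≠ d) : muD μ d = none :=
  dif_neg fun ⟨e, he, hd⟩ => h e he hd

theorem muH_eq_none {μ : Set (D × H)} {h : H} (hh : ∀ e ∈ μ, e.2 ≠ h) : muH μ h = none :=
  dif_neg fun ⟨e, he, hd⟩ => hh e he hd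

theorem mem_of_edgesD_eq {E s : Set (D × H)} {d : D} (hE : edgesD E d = s) {e : D × H}
    (he : e ∈ E) (hd : e.1 = d) : e ∈ s :=
  hE ▸ ⟨he, hd⟩

theorem mem_of_edgesH_eq {E s : Set (D × H)} {h : H} (hE : edgesH E h = s) {e : D × H}
    (he : e ∈ E) (hh : e.2 = h) : e ∈ s :=
  hE ▸ ⟨he, hh⟩

theorem mem_E_of_edgesD_eq {E s : Set (D × H)} {d : D} (hE : edgesD E d = s) {e : D × H}
    (he : e ∈ s) : e ∈ E :=
  (hE.symm ▸ he : e ∈ edgesD E d).1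

namespace SSMC

variable {I : SSMC D H} {μ : Set (D × H)}

namespace isMatching

theorem eq_of_fst_eq (hμ : I.isMatching μ) {e f : D × H} (he : e ∈ μ) (hf : f ∈ μ)
    (h : e.1 = f.1) : e = f :=
  hμ.2.1 e he f hf h

theorem eq_of_snd_eq (hμ : I.isMatching μ) {e f : D × H} (he : e ∈ μ) (hf : f ∈ μ)
    (h : e.2 = f.2) : e = f :=
  hμ.2.2 e he f hf h

theorem snd_eq_of_mem (hμ : I.isMatching μ) {d : D} {h h' : H} (he : (d, h) ∈ μ)
    (hf : (d, h') ∈ μ) : h = h' :=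
  congrArg Prod.snd (hμ.eq_of_fst_eq he hf rfl)

theorem fst_eq_of_mem (hμ : I.isMatching μ) {d d' : D} {h : H} (he : (d, h) ∈ μ)
    (hf : (d', h) ∈ μ) : d = d' :=
  congrArg Prod.fst (hμ.eq_of_snd_eq he hf rfl)

theorem muD_eq_of_mem (hμ : I.isMatching μ) {e : D × H} {d : D} (he : e ∈ μ) (hd : e.1 = d) :
    muD μ d = some e := by
  have hex : ∃ f, f ∈ μ ∧ f.1 = d := ⟨e, he, hd⟩
  rw [muD, dif_pos hex]
  exact congrArg some (hμ.eq_of_fst_eq hex.choose_spec.1 he (hex.choose_spec.2.trans hd.symm))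

theorem muH_eq_of_mem (hμ : I.isMatching μ) {e : D × H} {h : H} (he : e ∈ μ) (hh : e.2 = h) :
    muH μ h = some e := by
  have hex : ∃ f, f ∈ μ ∧ f.2 = h := ⟨e, he, hh⟩
  rw [muH, dif_pos hex]
  exact congrArg some (hμ.eq_of_snd_eq hex.choose_spec.1 he (hex.choose_spec.2.trans hh.symm))

end isMatching

theorem blocks_of_doctor_unmatched {e : D × H} (he : e ∈ I.E) (hfree : ∀ f ∈ μ, f.1 ≠ e.1)
    (hS : e.2 ∉ I.S) (hh : I.prefH e.2 (some e) (muH μ e.2)) : I.blocks μ e := by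
  have hd := I.prefD_none e.1 e ⟨he, rfl⟩
  refine ⟨he, fun hμ => hfree e hμ rfl, ?_, ⟨hh, fun h => absurd h hS⟩, Or.inl ?_⟩ <;>
    rw [muD_eq_none hfree]
  exacts [hd.1, hd]

theorem blocks_of_hospital_unmatched {e : D × H} (he : e ∈ I.E) (hfree : ∀ f ∈ μ, f.2 ≠ e.2)
    (hS : e.2 ∉ I.S) (hd : I.prefD e.1 (some e) (muD μ e.1)) : I.blocks μ e := by
  have hh := I.prefH_none e.2 e ⟨he, rfl⟩
  refine ⟨he, fun hμ => hfree e hμ rfl, hd, ⟨?_, fun h => absurd h hS⟩,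
    Or.inr ⟨?_, fun h => absurd h hS⟩⟩ <;> rw [muH_eq_none hfree]
  exacts [hh.1, hh]

namespace stable

theorem exists_doctor_edge_of_prefH (hst : I.stable μ) {e : D × H} (he : e ∈ I.E)
    (hS : e.2 ∉ I.S) (hh : I.prefH e.2 (some e) (muH μ e.2)) : ∃ f ∈ μ, f.1 = e.1 := by
  by_contra! hfree
  exact hst.2 e (blocks_of_doctor_unmatched he hfree hS hh)

theorem exists_hospital_edge_of_prefD (hst : I.stable μ) {e : D × H} (he : e ∈ I.E)
    (hS : e.2 ∉ I.S) (hd : I.prefD e.1 (some e) (muD μ e.1)) : ∃ f ∈ μ, f.2 = e.2 := by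
  by_contra! hfree
  exact hst.2 e (blocks_of_hospital_unmatched he hfree hS hd)

theorem exists_doctor_edge_or_exists_hospital_edge (hst : I.stable μ) {e : D × H}
    (he : e ∈ I.E) (hS : e.2 ∉ I.S) : (∃ f ∈ μ, f.1 = e.1) ∨ ∃ f ∈ μ, f.2 = e.2 := by
  refine or_iff_not_imp_right.2 fun hfree => hst.exists_doctor_edge_of_prefH he hS ?_
  push Not at hfree
  rw [muH_eq_none hfree]
  exact (I.prefH_none e.2 e ⟨he, rfl⟩).1

end stable

end SSMC

theorem clause_gadget_not_mem_q₂_of_mem_p₁q₁ {I : SSMC D H} {μ : Set (D × H)}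
    (hst : I.stable μ) {p₁ p₄ p : D} {q₁ q₂ : H} (hp14 : p₁ ≠ p₄) (hp : p ≠ p₄)
    (hq1S : q₁ ∉ I.S) (hE4 : edgesD I.E p₄ = {(p₄, q₁), (p₄, q₂)})
    (hq1a : I.simH q₁ (some (p₁, q₁)) (some (p₄, q₁))) (h₁ : (p₁, q₁) ∈ μ) : (p, q₂) ∉ μ := by
  intro h
  have he : (p₄, q₁) ∈ I.E := mem_E_of_edgesD_eq hE4 (by simp)
  obtain ⟨f, hf, hf1⟩ := hst.exists_doctor_edge_of_prefH he hq1S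
    (by rw [hst.1.muH_eq_of_mem h₁ rfl]; exact hq1a.2)
  rcases mem_of_edgesD_eq hE4 (hst.1.1 hf) hf1 with rfl | rfl
  · exact hp14 (hst.1.fst_eq_of_mem h₁ hf)
  · exact hp (hst.1.fst_eq_of_mem h hf)

theorem clause_gadget_p₄q₂_mem {I : SSMC D H} {μ : Set (D × H)} (hst : I.stable μ)
    {p₂ p₃ p₄ : D} {q₁ q₂ : H} (hq12 : q₁ ≠ q₂) (hq2S : q₂ ∉ I.S)
    (hE4 : edgesD I.E p₄ = {(p₄, q₁), (p₄, q₂)})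
    (hQ2 : edgesH I.E q₂ = {(p₂, q₂), (p₃, q₂), (p₄, q₂)})
    (hp4 : I.simD p₄ (some (p₄, q₁)) (some (p₄, q₂))) (h₂ : (p₂, q₂) ∉ μ) (h₃ : (p₃, q₂) ∉ μ) :
    (p₄, q₂) ∈ μ := by
  have he : (p₄, q₂) ∈ I.E := mem_E_of_edgesD_eq hE4 (by simp)
  have hq₂ : ∀ f ∈ μ, f.2 = q₂ → f = (p₄, q₂) := fun f hf hf2 => by
    rcases mem_of_edgesH_eq hQ2 (hst.1.1 hf) hf2 with rfl | rfl | rfl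
    exacts [absurd hf h₂, absurd hf h₃, rfl]
  rcases hst.exists_doctor_edge_or_exists_hospital_edge he hq2S with ⟨f, hf, hf1⟩ | ⟨f, hf, hf2⟩
  · rcases mem_of_edgesD_eq hE4 (hst.1.1 hf) hf1 with rfl | rfl
    · obtain ⟨g, hg, hg2⟩ := hst.exists_hospital_edge_of_prefD he hq2S
        (by rw [hst.1.muD_eq_of_mem hf rfl]; exact hp4.2)
      exact absurd (hst.1.snd_eq_of_mem hf (hq₂ g hg hg2 ▸ hg)) hq12
    · exact hf
  · exact hq₂ f hf hf2 ▸ hf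

theorem clause_gadget_exists_mem {I : SSMC D H} {μ : Set (D × H)} (hst : I.stable μ)
    {p₁ p₂ p₃ p₄ p₅ : D} {q₁ q₂ q₃ : H} (hq12 : q₁ ≠ q₂) (hq13 : q₁ ≠ q₃)
    (hq1S : q₁ ∉ I.S) (hq2S : q₂ ∉ I.S) (hq3S : q₃ ∉ I.S)
    (hE4 : edgesD I.E p₄ = {(p₄, q₁), (p₄, q₂)})
    (hE5 : edgesD I.E p₅ = {(p₅, q₁), (p₅, q₃)})
    (hQ1 : edgesH I.E q₁ = {(p₁, q₁), (p₄, q₁), (p₅, q₁)})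
    (hQ2 : edgesH I.E q₂ = {(p₂, q₂), (p₃, q₂), (p₄, q₂)})
    (hQ3 : edgesH I.E q₃ = {(p₅, q₃)})
    (hp4 : I.simD p₄ (some (p₄, q₁)) (some (p₄, q₂)))
    (hp5 : I.simD p₅ (some (p₅, q₁)) (some (p₅, q₃))) :
    (p₁, q₁) ∈ μ ∨ (p₂, q₂) ∈ μ ∨ (p₃, q₂) ∈ μ := by
  by_contra! ⟨h₁, h₂, h₃⟩
  have h₄ := clause_gadget_p₄q₂_mem hst hq12 hq2S hE4 hQ2 hp4 h₂ h₃
  have he41 : (p₄, q₁) ∈ I.E := mem_E_of_edgesD_eq hE4 (by simp)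
  have he53 : (p₅, q₃) ∈ I.E := mem_E_of_edgesD_eq hE5 (by simp)
  obtain ⟨f, hf, hf1⟩ : ∃ f ∈ μ, f.1 = p₅ := by
    rcases hst.exists_doctor_edge_or_exists_hospital_edge he53 hq3S with h | ⟨f, hf, hf2⟩
    · exact h
    · exact ⟨f, hf, by rw [mem_of_edgesH_eq hQ3 (hst.1.1 hf) hf2]⟩
  rcases mem_of_edgesD_eq hE5 (hst.1.1 hf) hf1 with rfl | rfl
  · obtain ⟨g, hg, hg2⟩ := hst.exists_hospital_edge_of_prefD he53 hq3S
      (by rw [hst.1.muD_eq_of_mem hf rfl]; exact hp5.2)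
    have hg' : g = (p₅, q₃) := mem_of_edgesH_eq hQ3 (hst.1.1 hg) hg2
    exact hq13 (hst.1.snd_eq_of_mem hf (hg' ▸ hg))
  · obtain ⟨g, hg, hg2⟩ := hst.exists_hospital_edge_of_prefD he41 hq1S
      (by rw [hst.1.muD_eq_of_mem h₄ rfl]; exact hp4.1)
    rcases mem_of_edgesH_eq hQ1 (hst.1.1 hg) hg2 with rfl | rfl | rfl
    · exact h₁ hg
    · exact hq12 (hst.1.snd_eq_of_mem hg h₄)
    · exact hq13 (hst.1.snd_eq_of_mem hg hf)

theorem clause_gadget_general {D H : Type}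
    (I : SSMC D H) (p₁ p₂ p₃ p₄ p₅ : D) (q₁ q₂ q₃ : H)
    (hp14 : p₁ ≠ p₄)
    (hp23 : p₂ ≠ p₃) (hp24 : p₂ ≠ p₄)
    (hp34 : p₃ ≠ p₄)
    (hq12 : q₁ ≠ q₂) (hq13 : q₁ ≠ q₃)
    (hq1S : q₁ ∉ I.S) (hq2S : q₂ ∉ I.S) (hq3S : q₃ ∉ I.S)
    (hE4 : edgesD I.E p₄ = {(p₄, q₁), (p₄, q₂)})
    (hE5 : edgesD I.E p₅ = {(p₅, q₁), (p₅, q₃)})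
    (hQ1 : edgesH I.E q₁ = {(p₁, q₁), (p₄, q₁), (p₅, q₁)})
    (hQ2 : edgesH I.E q₂ = {(p₂, q₂), (p₃, q₂), (p₄, q₂)})
    (hQ3 : edgesH I.E q₃ = {(p₅, q₃)})
    (hq1a : I.simH q₁ (some (p₁, q₁)) (some (p₄, q₁)))
    (hp4 : I.simD p₄ (some (p₄, q₁)) (some (p₄, q₂)))
    (hp5 : I.simD p₅ (some (p₅, q₁)) (some (p₅, q₃))) :
    ∀ μ : Set (D × H), I.stable μ →
      (((p₁, q₁) ∈ μ ∧ (p₂, q₂) ∉ μ ∧ (p₃, q₂) ∉ μ) ∨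
       ((p₂, q₂) ∈ μ ∧ (p₁, q₁) ∉ μ ∧ (p₃, q₂) ∉ μ) ∨
       ((p₃, q₂) ∈ μ ∧ (p₁, q₁) ∉ μ ∧ (p₂, q₂) ∉ μ)) := by
  intro μ hst
  have h23 : (p₂, q₂) ∈ μ → (p₃, q₂) ∉ μ := fun h₂ h₃ => hp23 (hst.1.fst_eq_of_mem h₂ h₃)
  have h12 : (p₁, q₁) ∈ μ → (p₂, q₂) ∉ μ :=
    clause_gadget_not_mem_q₂_of_mem_p₁q₁ hst hp14 hp24 hq1S hE4 hq1a
  have h13 : (p₁, q₁) ∈ μ → (p₃, q₂) ∉ μ :=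
    clause_gadget_not_mem_q₂_of_mem_p₁q₁ hst hp14 hp34 hq1S hE4 hq1a
  rcases clause_gadget_exists_mem hst hq12 hq13 hq1S hq2S hq3S hE4 hE5 hQ1 hQ2 hQ3 hp4 hp5
    with h | h | h <;> tauto

/-- clause gadget: in an instance containing doctors
`p₁, …, p₅` and hospitals `q₁, q₂, q₃ ∉ S` with the indicated edge sets and
indifferences, every stable matching contains exactly one of the edges
`(p₁,q₁)`, `(p₂,q₂)`, `(p₃,q₂)`. -/
theorem clause_gadget {D H : Type} [Fintype D] [Fintype H]
    (I : SSMC D H) (p₁ p₂ p₃ p₄ p₅ : D) (q₁ q₂ q₃ : H)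
    (hp12 : p₁ ≠ p₂) (hp13 : p₁ ≠ p₃) (hp14 : p₁ ≠ p₄) (hp15 : p₁ ≠ p₅)
    (hp23 : p₂ ≠ p₃) (hp24 : p₂ ≠ p₄) (hp25 : p₂ ≠ p₅)
    (hp34 : p₃ ≠ p₄) (hp35 : p₃ ≠ p₅) (hp45 : p₄ ≠ p₅)
    (hq12 : q₁ ≠ q₂) (hq13 : q₁ ≠ q₃) (hq23 : q₂ ≠ q₃)
    (hq1S : q₁ ∉ I.S) (hq2S : q₂ ∉ I.S) (hq3S : q₃ ∉ I.S)
    (hE4 : edgesD I.E p₄ = {(p₄, q₁), (p₄, q₂)})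
    (hE5 : edgesD I.E p₅ = {(p₅, q₁), (p₅, q₃)})
    (hQ1 : edgesH I.E q₁ = {(p₁, q₁), (p₄, q₁), (p₅, q₁)})
    (hQ2 : edgesH I.E q₂ = {(p₂, q₂), (p₃, q₂), (p₄, q₂)})
    (hQ3 : edgesH I.E q₃ = {(p₅, q₃)})
    (hq1a : I.simH q₁ (some (p₁, q₁)) (some (p₄, q₁)))
    (hq1b : I.simH q₁ (some (p₄, q₁)) (some (p₅, q₁)))
    (hq2a : I.simH q₂ (some (p₂, q₂)) (some (p₃, q₂)))
    (hq2b : I.simH q₂ (some (p₃, q₂)) (some (p₄, q₂)))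
    (hp4 : I.simD p₄ (some (p₄, q₁)) (some (p₄, q₂)))
    (hp5 : I.simD p₅ (some (p₅, q₁)) (some (p₅, q₃))) :
    ∀ μ : Set (D × H), I.stable μ →
      (((p₁, q₁) ∈ μ ∧ (p₂, q₂) ∉ μ ∧ (p₃, q₂) ∉ μ) ∨
       ((p₂, q₂) ∈ μ ∧ (p₁, q₁) ∉ μ ∧ (p₃, q₂) ∉ μ) ∨
       ((p₃, q₂) ∈ μ ∧ (p₁, q₁) ∉ μ ∧ (p₂, q₂) ∉ μ)) :=
  clause_gadget_general I p₁ p₂ p₃ p₄ p₅ q₁ q₂ q₃ hp14 hp23 hp24 hp34 hq12 hq13 hq1S hq2S hq3S hE4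
    hE5 hQ1 hQ2 hQ3 hq1a hp4 hp5
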